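/- Let C be a unital C*-algebra, u ∈ C a positive element with ‖u‖ ≤ 1, and w ∈ C a unitary with uw = wu. Let s, c₀, c₁ : [0,1] → ℝ be the continuous functions s(t) = sin(πt), c₀(t) = |cos(πt)| for t ∈ [0,1/2] and c₀(t) = 0 otherwise, c₁(t) = |cos(πt)| for t ∈ (1/2,1] and c₁(t) = 0 otherwise, and let s(u), c₀(u), c₁(u) ∈ C be the corresponding elements obtained by continuous functional calculus (note the spectrum of u is contained in [0,1]). Define the 2×2 matrices over C: Q = [[s(u)², s(u)c₀(u) + s(u)c₁(u)w], [s(u)c₁(u)w* + s(u)c₀(u), (c₀(u) + c₁(u))²]] and X = [[s(u), −c₀(u) − c₁(u)w], [c₀(u) + c₁(u)w*, s(u)]]. Then Q is a projection in M₂(C), X is a unitary in M₂(C), and X*QX = [[1, 0], [0, 0]]. -/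
import Mathlib

open Real Set

lemma cfc_mul_comm_of_commute {C : Type*} [CStarAlgebra C] (u w : C)
    (hu : IsSelfAdjoint u) (hw : w ∈ unitary C) (huw : u * w = w * u)
    (f : ℝ → ℝ) (hf : ContinuousOn f (spectrum ℝ u)) :
    cfc f u * w = w * cfc f u := by
  have hw1 : star w * w = 1 := hw.1
  have hw2 : w * star w = 1 := hw.2
  let φ : C →⋆ₐ[ℂ] C :=
  { toFun := fun x => w * x * star w
    map_one' := by show w * 1 * star w = 1; rw [mul_one, hw2]
    map_mul' := fun x y => by
      have : star w * (w * (y * star w)) = y * star w := by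
        rw [← mul_assoc, hw1, one_mul]
      simp only [mul_assoc, this]
    map_zero' := by simp
    map_add' := fun x y => by simp [mul_add, add_mul]
    commutes' := fun r => by
      simp only [Algebra.algebraMap_eq_smul_one, mul_smul_comm, smul_mul_assoc,
        mul_one, one_mul, hw2]
    map_star' := fun x => by simp [star_mul, mul_assoc] }
  have hφu : φ u = u := by
    show w * u * star w = u
    rw [← huw, mul_assoc, hw2, mul_one]
  have hφcont : Continuous φ := by
    show Continuous fun x => w * x * star w
    fun_prop
  have hφa : IsSelfAdjoint (φ u) := by rw [hφu]; exact hu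
  have key : φ (cfc f u) = cfc f (φ u) :=
    StarAlgHomClass.map_cfc (S := ℂ) φ f u hf hφcont hu hφa
  have h2 : w * cfc f u * star w = cfc f u := by
    have : φ (cfc f u) = cfc f u := by rw [key, hφu]
    exact this
  calc cfc f u * w = (w * cfc f u * star w) * w := by rw [h2]
    _ = w * cfc f u := by rw [mul_assoc, hw1, mul_one]

/-- Let `u` be a positive contraction and `w` a unitary in a unital C*-algebra `C`
with `uw = wu`. With `s(t) = sin(πt)`, `c₀(t) = |cos(πt)|` on `[0,1/2]` and `0` otherwise,
`c₁(t) = |cos(πt)|` on `(1/2,1]` and `0` otherwise (applied to `u` via continuous functional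
calculus), the matrix `Q` is a projection, `X` is a unitary, and `X*QX = [[1,0],[0,0]]`. -/
theorem stmt_1 {C : Type*} [CStarAlgebra C] [PartialOrder C] [StarOrderedRing C] (u w : C)
    (hu : 0 ≤ u) (hu1 : ‖u‖ ≤ 1) (hw : w ∈ unitary C) (huw : u * w = w * u)
    (s c₀ c₁ : ℝ → ℝ)
    (hsc : ContinuousOn s (Icc 0 1)) (hc₀c : ContinuousOn c₀ (Icc 0 1))
    (hc₁c : ContinuousOn c₁ (Icc 0 1))
    (hs : ∀ t ∈ Icc (0:ℝ) 1, s t = Real.sin (π * t))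
    (hc₀ : ∀ t ∈ Icc (0:ℝ) (1/2), c₀ t = |Real.cos (π * t)|)
    (hc₀' : ∀ t ∈ Ioc (1/2 : ℝ) 1, c₀ t = 0)
    (hc₁ : ∀ t ∈ Ioc (1/2 : ℝ) 1, c₁ t = |Real.cos (π * t)|)
    (hc₁' : ∀ t ∈ Icc (0:ℝ) (1/2), c₁ t = 0)
    (Q X : Matrix (Fin 2) (Fin 2) C)
    (hQ : Q = !![cfc s u * cfc s u, cfc s u * cfc c₀ u + cfc s u * cfc c₁ u * w;
                 cfc s u * cfc c₁ u * star w + cfc s u * cfc c₀ u,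
                 (cfc c₀ u + cfc c₁ u) * (cfc c₀ u + cfc c₁ u)])
    (hX : X = !![cfc s u, -(cfc c₀ u) - cfc c₁ u * w;
                 cfc c₀ u + cfc c₁ u * star w, cfc s u]) :
    (star Q = Q ∧ Q * Q = Q) ∧
    X ∈ unitary (Matrix (Fin 2) (Fin 2) C) ∧
    star X * Q * X = !![1, 0; 0, 0] := by
  rcases subsingleton_or_nontrivial C with htriv | hnt
  · refine ⟨⟨Subsingleton.elim _ _, Subsingleton.elim _ _⟩, ?_, Subsingleton.elim _ _⟩
    rw [Unitary.mem_iff]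
    exact ⟨Subsingleton.elim _ _, Subsingleton.elim _ _⟩
  have hu' : IsSelfAdjoint u := IsSelfAdjoint.of_nonneg hu
  have hw1 : star w * w = 1 := hw.1
  have hw2 : w * star w = 1 := hw.2
  have hσ : spectrum ℝ u ⊆ Icc 0 1 := by
    intro x hx
    have h0 : 0 ≤ x := spectrum_nonneg_of_nonneg hu hx
    have h1 : ‖x‖ ≤ ‖u‖ := spectrum.norm_le_norm_of_mem hx
    rw [Real.norm_eq_abs, abs_of_nonneg h0] at h1
    exact ⟨h0, h1.trans hu1⟩
  have hs' : ContinuousOn s (spectrum ℝ u) := hsc.mono hσ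
  have hc₀'' : ContinuousOn c₀ (spectrum ℝ u) := hc₀c.mono hσ
  have hc₁'' : ContinuousOn c₁ (spectrum ℝ u) := hc₁c.mono hσ
  set S := cfc s u with hSdef
  set A := cfc c₀ u with hAdef
  set B := cfc c₁ u with hBdef
  have hSa : IsSelfAdjoint S := cfc_predicate s u
  have hAa : IsSelfAdjoint A := cfc_predicate c₀ u
  have hBa : IsSelfAdjoint B := cfc_predicate c₁ u
  have cSA : Commute S A := cfc_commute_cfc s c₀ u
  have cSB : Commute S B := cfc_commute_cfc s c₁ u
  have cAB : Commute A B := cfc_commute_cfc c₀ c₁ u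
  have hSw : S * w = w * S := cfc_mul_comm_of_commute u w hu' hw huw s hs'
  have hAw : A * w = w * A := cfc_mul_comm_of_commute u w hu' hw huw c₀ hc₀''
  have hBw : B * w = w * B := cfc_mul_comm_of_commute u w hu' hw huw c₁ hc₁''
  have star_comm : ∀ x : C, IsSelfAdjoint x → x * w = w * x → x * star w = star w * x := by
    intro x hx hxw
    have h := congrArg star hxw
    rw [star_mul, star_mul, hx.star_eq] at h
    exact h.symm
  have hSws : S * star w = star w * S := star_comm S hSa hSw
  have hAws : A * star w = star w * A := star_comm A hAa hAw
  have hBws : B * star w = star w * B := star_comm B hBa hBw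
  have hABz : A * B = 0 := by
    rw [hAdef, hBdef, ← cfc_mul c₀ c₁ u hc₀'' hc₁'']
    have h : cfc (fun x => c₀ x * c₁ x) u = cfc (fun _ : ℝ => (0:ℝ)) u := by
      apply cfc_congr
      intro t ht
      have ht' := hσ ht
      rcases le_or_gt t (1/2) with h | h
      · simp [hc₁' t ⟨ht'.1, h⟩]
      · simp [hc₀' t ⟨h, ht'.2⟩]
    rw [h]
    exact cfc_const_zero ℝ u
  have hBAz : B * A = 0 := by rw [← cAB.eq, hABz]
  have hsum : S * S + (A * A + B * B) = 1 := by
    rw [hSdef, hAdef, hBdef, ← cfc_mul s s u hs' hs', ← cfc_mul c₀ c₀ u hc₀'' hc₀'',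
      ← cfc_mul c₁ c₁ u hc₁'' hc₁'',
      ← cfc_add u (fun x => c₀ x * c₀ x) (fun x => c₁ x * c₁ x) (hc₀''.mul hc₀'') (hc₁''.mul hc₁''),
      ← cfc_add u (fun x => s x * s x) (fun x => c₀ x * c₀ x + c₁ x * c₁ x) (hs'.mul hs')
        ((hc₀''.mul hc₀'').add (hc₁''.mul hc₁''))]
    have h : cfc (fun x => s x * s x + (c₀ x * c₀ x + c₁ x * c₁ x)) u
        = cfc (fun _ : ℝ => (1:ℝ)) u := by
      apply cfc_congr
      intro t ht
      have ht' := hσ ht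
      have hpyth := Real.sin_sq_add_cos_sq (π * t)
      rw [pow_two, pow_two] at hpyth
      rcases le_or_gt t (1/2) with h | h
      · simp only [hs t ht', hc₀ t ⟨ht'.1, h⟩, hc₁' t ⟨ht'.1, h⟩, abs_mul_abs_self,
          mul_zero, add_zero]
        linarith
      · simp only [hs t ht', hc₀' t ⟨h, ht'.2⟩, hc₁ t ⟨h, ht'.2⟩, abs_mul_abs_self,
          mul_zero, zero_add]
        linarith
    rw [h]
    exact cfc_const_one ℝ u
  set V : C := A + B * w with hVdef
  set W : C := A + B * star w with hWdef
  have hstarS : star S = S := hSa.star_eq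
  have hstarV : star V = W := by
    rw [hVdef, hWdef, star_add, star_mul, hAa.star_eq, hBa.star_eq, hBws]
  have hstarW : star W = V := by
    rw [hWdef, hVdef, star_add, star_mul, star_star, hAa.star_eq, hBa.star_eq, hBw]
  have cSV : Commute S V := by
    rw [hVdef]
    exact cSA.add_right (cSB.mul_right hSw)
  have cSW : Commute S W := by
    rw [hWdef]
    exact cSA.add_right (cSB.mul_right hSws)
  have hVW : V * W = A * A + B * B := by
    rw [hVdef, hWdef]
    have e1 : A * (B * star w) = 0 := by rw [← mul_assoc, hABz, zero_mul]
    have e2 : B * w * A = 0 := by rw [mul_assoc, ← hAw, ← mul_assoc, hBAz, zero_mul]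
    have e3 : B * w * (B * star w) = B * B := by
      rw [mul_assoc, ← mul_assoc w B, ← hBw, mul_assoc, hw2, mul_one]
    rw [add_mul, mul_add, mul_add, e1, e2, e3, add_zero, zero_add]
  have hWV : W * V = A * A + B * B := by
    rw [hWdef, hVdef]
    have e1 : A * (B * w) = 0 := by rw [← mul_assoc, hABz, zero_mul]
    have e2 : B * star w * A = 0 := by
      rw [mul_assoc, ← hAws, ← mul_assoc, hBAz, zero_mul]
    have e3 : B * star w * (B * w) = B * B := by
      rw [mul_assoc, ← mul_assoc (star w) B, ← hBws, mul_assoc, hw1, mul_one]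
    rw [add_mul, mul_add, mul_add, e1, e2, e3, add_zero, zero_add]
  have cVW : Commute V W := hVW.trans hWV.symm
  have h1 : S * S + V * W = 1 := by rw [hVW]; exact hsum
  have h1' : W * V + S * S = 1 := by rw [hWV, add_comm]; exact hsum
  have t1 : S * A + S * B * w = S * V := by rw [hVdef, mul_add, ← mul_assoc]
  have t2 : S * B * star w + S * A = S * W := by rw [hWdef, mul_add, ← mul_assoc, add_comm]
  have t3 : (A + B) * (A + B) = V * W := by
    rw [hVW, add_mul, mul_add, mul_add, hABz, hBAz, add_zero, zero_add]
  have hQ' : Q = !![S * S, S * V; S * W, V * W] := by rw [hQ, t1, t2, t3]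
  have t4 : -A - B * w = -V := by rw [hVdef, neg_add, sub_eq_add_neg]
  have hX' : X = !![S, -V; W, S] := by rw [hX, t4]
  have hXstar : star X = !![S, V; -W, S] := by
    rw [hX']
    ext i j
    rw [Matrix.star_apply]
    fin_cases i <;> fin_cases j <;>
      simp [hstarS, hstarV, hstarW]
  have starQ : star Q = Q := by
    rw [hQ']
    ext i j
    rw [Matrix.star_apply]
    fin_cases i <;> fin_cases j <;>
      simp [star_mul, hstarS, hstarV, hstarW, cSV.eq, cSW.eq, cVW.symm.eq]
  have QQ : Q * Q = Q := by
    rw [hQ', Matrix.mul_fin_two]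
    have e1 : S * S * (S * S) + S * V * (S * W) = S * S := by
      rw [Commute.mul_mul_mul_comm cSV.symm S W, ← mul_add, h1, mul_one]
    have e2 : S * S * (S * V) + S * V * (V * W) = S * V := by
      have c1 : Commute (S * S) (S * V) :=
        Commute.mul_left ((Commute.refl S).mul_right cSV) ((Commute.refl S).mul_right cSV)
      rw [c1.eq, ← mul_add, h1, mul_one]
    have e3 : S * W * (S * S) + V * W * (S * W) = S * W := by
      have c2 : Commute (V * W) (S * W) :=
        Commute.mul_left (cSV.symm.mul_right cVW) (cSW.symm.mul_right (Commute.refl W))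
      rw [c2.eq, ← mul_add, h1, mul_one]
    have e4 : S * W * (S * V) + V * W * (V * W) = V * W := by
      rw [Commute.mul_mul_mul_comm cSW.symm S V, cVW.symm.eq, ← add_mul, h1, one_mul]
    rw [e1, e2, e3, e4]
  have hXunit : X ∈ unitary (Matrix (Fin 2) (Fin 2) C) := by
    rw [Unitary.mem_iff]
    constructor
    · rw [hXstar, hX', Matrix.mul_fin_two, Matrix.one_fin_two]
      have e5 : S * S + V * W = 1 := h1
      have e6 : S * -V + V * S = 0 := by rw [mul_neg, cSV.eq, neg_add_cancel]
      have e7 : -W * S + S * W = 0 := by rw [neg_mul, cSW.eq, neg_add_cancel]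
      have e8 : -W * -V + S * S = 1 := by rw [neg_mul_neg]; exact h1'
      rw [e5, e6, e7, e8]
    · rw [hXstar, hX', Matrix.mul_fin_two, Matrix.one_fin_two]
      have e5 : S * S + -V * -W = 1 := by rw [neg_mul_neg]; exact h1
      have e6 : S * V + -V * S = 0 := by rw [neg_mul, cSV.eq, add_neg_cancel]
      have e7 : W * S + S * -W = 0 := by rw [mul_neg, cSW.eq, add_neg_cancel]
      have e8 : W * V + S * S = 1 := h1'
      rw [e5, e6, e7, e8]
  have final : star X * Q * X = !![1, 0; 0, 0] := by
    rw [hXstar, hQ', hX', Matrix.mul_fin_two]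
    have f1 : S * (S * S) + V * (S * W) = S := by
      have h : V * (S * W) = S * (V * W) := by rw [← mul_assoc, cSV.symm.eq, mul_assoc]
      rw [h, ← mul_add, h1, mul_one]
    have f2 : S * (S * V) + V * (V * W) = V := by
      have hA1 : S * (S * V) = S * S * V := (mul_assoc S S V).symm
      have hA2 : V * (V * W) = V * W * V := by rw [mul_assoc, cVW.symm.eq]
      rw [hA1, hA2, ← add_mul, h1, one_mul]
    have f3 : -W * (S * S) + S * (S * W) = 0 := by
      have h : W * (S * S) = S * (S * W) := by
        rw [← mul_assoc, cSW.symm.eq, mul_assoc, cSW.symm.eq]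
      rw [neg_mul, h, neg_add_cancel]
    have f4 : -W * (S * V) + S * (V * W) = 0 := by
      have h : W * (S * V) = S * (V * W) := by
        rw [← mul_assoc, cSW.symm.eq, mul_assoc, cVW.symm.eq]
      rw [neg_mul, h, neg_add_cancel]
    rw [f1, f2, f3, f4, Matrix.mul_fin_two]
    have g1 : S * S + V * W = 1 := h1
    have g2 : S * -V + V * S = 0 := by rw [mul_neg, cSV.eq, neg_add_cancel]
    have g3 : (0:C) * S + 0 * W = 0 := by rw [zero_mul, zero_mul, add_zero]
    have g4 : (0:C) * -V + 0 * S = 0 := by rw [zero_mul, zero_mul, add_zero]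
    rw [g1, g2, g3, g4]
  exact ⟨⟨starQ, QQ⟩, hXunit, final⟩
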